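/- arXiv:2504.06644 — 2 statements merged into one kernel-verified Lean document; each statement's English description precedes it below -/
import Mathlib

section
/- (Iteration lemma) Let M, b > 1 and κ, δ > 0. Let (Y_n)_{n≥0} and (Z_n)_{n≥0} be sequences of nonnegative real numbers such that for every n: Y_{n+1} ≤ M b^n (Y_n^{1+δ} + Z_n^{1+κ} Y_n^δ) and Z_{n+1} ≤ M b^n (Y_n + Z_n^{1+κ}). Assume moreover that Y₀ + Z₀^{1+κ} ≤ (2M)^{−(1+κ)/ζ} b^{−(1+κ)/ζ²}, where ζ = min{κ, δ}. Then Y_n → 0 and Z_n → 0 as n → ∞. -/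
open Filter

/-- rpow antitone in exponent, allowing base zero. -/
lemma rpow_le_rpow_exp_ge' {x y z : ℝ} (hx : 0 ≤ x) (hx1 : x ≤ 1) (hz : 0 < z)
    (hzy : z ≤ y) : x ^ y ≤ x ^ z := by
  rcases eq_or_lt_of_le hx with h | h
  · rw [← h, Real.zero_rpow (by linarith : y ≠ 0), Real.zero_rpow (ne_of_gt hz)]
  · exact Real.rpow_le_rpow_of_exponent_ge h hx1 hzy

/-- Iteration lemma, [DiBenedetto, Ch. 1, Lemma 4.2]. -/
theorem iteration_lemma (M b κ δ : ℝ) (Y Z : ℕ → ℝ)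
    (hM : 1 < M) (hb : 1 < b) (hκ : 0 < κ) (hδ : 0 < δ)
    (hY : ∀ n, 0 ≤ Y n) (hZ : ∀ n, 0 ≤ Z n)
    (hYrec : ∀ n, Y (n+1) ≤ M * b ^ n * (Y n ^ (1 + δ) + Z n ^ (1 + κ) * Y n ^ δ))
    (hZrec : ∀ n, Z (n+1) ≤ M * b ^ n * (Y n + Z n ^ (1 + κ)))
    (hinit : Y 0 + Z 0 ^ (1 + κ)
      ≤ (2*M) ^ (-(1 + κ)/min κ δ) * b ^ (-(1 + κ)/(min κ δ)^2)) :
    Tendsto Y atTop (nhds 0) ∧ Tendsto Z atTop (nhds 0) := by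
  set σ := min κ δ with hσdef
  have hσ : 0 < σ := lt_min hκ hδ
  have hσκ : σ ≤ κ := min_le_left _ _
  have hσδ : σ ≤ δ := min_le_right _ _
  have hbpos : (0:ℝ) < b := by linarith
  have hb1 : (1:ℝ) ≤ b := hb.le
  have hMpos : (0:ℝ) < M := by linarith
  have h2M : (1:ℝ) < 2*M := by linarith
  have h2Mpos : (0:ℝ) < 2*M := by linarith
  set E : ℕ → ℝ := fun n => Y n + Z n ^ (1+κ) with hEdef
  have hEnn : ∀ n, 0 ≤ E n := fun n => add_nonneg (hY n) (Real.rpow_nonneg (hZ n) _)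
  have hYE : ∀ n, Y n ≤ E n := fun n => le_add_of_nonneg_right (Real.rpow_nonneg (hZ n) _)
  have hZE : ∀ n, Z n ^ (1+κ) ≤ E n := fun n => le_add_of_nonneg_left (hY n)
  set q : ℝ := b ^ (-((1+κ)/σ)) with hqdef
  have hq0 : 0 < q := Real.rpow_pos_of_pos hbpos _
  have hexpneg : -((1+κ)/σ) < 0 := by
    have : 0 < (1+κ)/σ := div_pos (by linarith) hσ
    linarith
  have hq1 : q < 1 := Real.rpow_lt_one_of_one_lt_of_neg hb hexpneg
  -- initial smallness
  have hE0 : E 0 ≤ (2*M) ^ (-(1 + κ)/σ) * b ^ (-(1 + κ)/σ^2) := hinit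
  have hE0le1 : E 0 ≤ 1 := by
    refine hE0.trans ?_
    have h1 : (2*M) ^ (-(1 + κ)/σ) ≤ 1 :=
      Real.rpow_le_one_of_one_le_of_nonpos h2M.le
        (div_nonpos_of_nonpos_of_nonneg (by linarith) hσ.le)
    have h2 : b ^ (-(1 + κ)/σ^2) ≤ 1 :=
      Real.rpow_le_one_of_one_le_of_nonpos hb1
        (div_nonpos_of_nonpos_of_nonneg (by linarith) (by positivity))
    have h1' : 0 ≤ (2*M) ^ (-(1 + κ)/σ) := (Real.rpow_pos_of_pos h2Mpos _).le
    nlinarith [Real.rpow_pos_of_pos hbpos (-(1 + κ)/σ^2)]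
  -- key consequence of initial smallness
  have hE0σ : E 0 ^ σ ≤ (2*M) ^ (-(1+κ)) * q := by
    have h1 : E 0 ^ σ ≤ ((2*M) ^ (-(1 + κ)/σ) * b ^ (-(1 + κ)/σ^2)) ^ σ :=
      Real.rpow_le_rpow (hEnn 0) hE0 hσ.le
    refine h1.trans_eq ?_
    rw [Real.mul_rpow (Real.rpow_pos_of_pos h2Mpos _).le (Real.rpow_pos_of_pos hbpos _).le,
      ← Real.rpow_mul h2Mpos.le, ← Real.rpow_mul hbpos.le, hqdef]
    congr 1
    · congr 1; field_simp
    · congr 1; field_simp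
  -- main induction
  have hmain : ∀ n, E n ≤ E 0 * q ^ n := by
    intro n
    induction n with
    | zero => simp
    | succ n IH =>
      have hqn0 : (0:ℝ) ≤ q ^ n := (pow_pos hq0 n).le
      have hA0 : 0 ≤ E 0 * q ^ n := mul_nonneg (hEnn 0) hqn0
      have hEn1 : E n ≤ 1 := by
        refine IH.trans ?_
        have h := mul_le_mul hE0le1 (pow_le_one₀ hq0.le hq1.le) hqn0 zero_le_one
        simpa using h
      -- express q ^ n as an rpow of b
      have hqn : ∀ m : ℕ, (q : ℝ) ^ m = b ^ (-((1+κ)/σ) * m) := by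
        intro m
        rw [Real.rpow_mul hbpos.le, Real.rpow_natCast]
      -- bound on Y (n+1)
      have hYb : Y (n+1) ≤ (1/2) * (E 0 * q ^ (n+1)) := by
        have e1 : Y n ^ (1+δ) + Z n ^ (1+κ) * Y n ^ δ = Y n ^ δ * E n := by
          rw [Real.rpow_add' (hY n) (by linarith : (1:ℝ) + δ ≠ 0), Real.rpow_one, hEdef]
          ring
        have e2 : Y n ^ δ * E n ≤ E n ^ σ * E n := by
          have h3 : Y n ^ δ ≤ E n ^ δ := Real.rpow_le_rpow (hY n) (hYE n) hδ.le
          have h4 : E n ^ δ ≤ E n ^ σ := rpow_le_rpow_exp_ge' (hEnn n) hEn1 hσ hσδ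
          exact mul_le_mul_of_nonneg_right (h3.trans h4) (hEnn n)
        have e3 : E n ^ σ * E n ≤ (E 0 * q ^ n) ^ σ * (E 0 * q ^ n) :=
          mul_le_mul (Real.rpow_le_rpow (hEnn n) IH hσ.le) IH (hEnn n)
            (Real.rpow_nonneg hA0 _)
        have e4 : (E 0 * q ^ n) ^ σ = E 0 ^ σ * (q ^ n) ^ σ :=
          Real.mul_rpow (hEnn 0) hqn0
        -- b ^ n * (q^n)^σ ≤ 1
        have e5 : (b:ℝ) ^ n * ((q:ℝ) ^ n) ^ σ ≤ 1 := by
          rw [hqn n, ← Real.rpow_mul hbpos.le, ← Real.rpow_natCast b n,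
            ← Real.rpow_add hbpos]
          refine Real.rpow_le_one_of_one_le_of_nonpos hb1 ?_
          have : (n:ℝ) + -((1+κ)/σ) * n * σ = -(κ * n) := by
            field_simp; ring
          rw [this]
          have : (0:ℝ) ≤ κ * n := by positivity
          linarith
        -- M * (2M)^(-(1+κ)) ≤ 1/2
        have e6 : M * (2*M) ^ (-(1+κ)) ≤ 1/2 := by
          rw [Real.rpow_neg h2Mpos.le]
          rw [mul_inv_le_iff₀ (Real.rpow_pos_of_pos h2Mpos _)]
          have : (2*M) ^ ((1:ℝ)) ≤ (2*M) ^ (1+κ) :=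
            Real.rpow_le_rpow_of_exponent_le h2M.le (by linarith)
          rw [Real.rpow_one] at this
          linarith
        calc Y (n+1) ≤ M * b ^ n * (Y n ^ (1 + δ) + Z n ^ (1 + κ) * Y n ^ δ) := hYrec n
          _ = M * b ^ n * (Y n ^ δ * E n) := by rw [e1]
          _ ≤ M * b ^ n * ((E 0 * q ^ n) ^ σ * (E 0 * q ^ n)) := by
              have hMb : 0 ≤ M * (b:ℝ)^n := by positivity
              exact mul_le_mul_of_nonneg_left (e2.trans e3) hMb
          _ = (M * E 0 ^ σ) * (b ^ n * (q ^ n) ^ σ) * (E 0 * q ^ n) := by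
              rw [e4]; ring
          _ ≤ (M * E 0 ^ σ) * 1 * (E 0 * q ^ n) := by
              have h7 : 0 ≤ M * E 0 ^ σ :=
                mul_nonneg hMpos.le (Real.rpow_nonneg (hEnn 0) σ)
              exact mul_le_mul_of_nonneg_right
                (mul_le_mul_of_nonneg_left e5 h7) hA0
          _ ≤ (M * ((2*M) ^ (-(1+κ)) * q)) * 1 * (E 0 * q ^ n) := by
              exact mul_le_mul_of_nonneg_right
                (mul_le_mul_of_nonneg_right
                  (mul_le_mul_of_nonneg_left hE0σ hMpos.le) zero_le_one) hA0
          _ ≤ (1/2) * (E 0 * q ^ (n+1)) := by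
              have h12 : M * ((2*M) ^ (-(1+κ)) * q) ≤ (1/2) * q :=
                calc M * ((2*M) ^ (-(1+κ)) * q) = (M * (2*M) ^ (-(1+κ))) * q := by ring
                  _ ≤ (1/2) * q := mul_le_mul_of_nonneg_right e6 hq0.le
              calc (M * ((2*M) ^ (-(1+κ)) * q)) * 1 * (E 0 * q ^ n)
                  = (M * ((2*M) ^ (-(1+κ)) * q)) * (E 0 * q ^ n) := by ring
                _ ≤ ((1/2) * q) * (E 0 * q ^ n) := mul_le_mul_of_nonneg_right h12 hA0
                _ = (1/2) * (E 0 * q ^ (n+1)) := by rw [pow_succ]; ring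
      -- bound on Z (n+1) ^ (1+κ)
      have hZb : Z (n+1) ^ (1+κ) ≤ (1/2) * (E 0 * q ^ (n+1)) := by
        have h1κ : (0:ℝ) < 1 + κ := by linarith
        have e1 : Z (n+1) ^ (1+κ) ≤ (M * b ^ n * E n) ^ (1+κ) :=
          Real.rpow_le_rpow (hZ _) (hZrec n) h1κ.le
        have e2 : (M * b ^ n * E n) ^ (1+κ) ≤ (M * b ^ n * (E 0 * q ^ n)) ^ (1+κ) := by
          refine Real.rpow_le_rpow (mul_nonneg (by positivity) (hEnn n)) ?_ h1κ.le
          exact mul_le_mul_of_nonneg_left IH (by positivity)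
        have e3 : (M * b ^ n * (E 0 * q ^ n)) ^ (1+κ)
            = M ^ (1+κ) * ((b:ℝ)^n) ^ (1+κ) * (E 0 ^ (1+κ) * ((q:ℝ)^n) ^ (1+κ)) := by
          rw [Real.mul_rpow (by positivity) hA0, Real.mul_rpow (by positivity) (by positivity),
            Real.mul_rpow (hEnn 0) hqn0]
        have e4 : E 0 ^ (1+κ) = E 0 * E 0 ^ κ := by
          rw [Real.rpow_add' (hEnn 0) (by linarith), Real.rpow_one]
        have e5 : ((q:ℝ)^n) ^ (1+κ) = q^n * ((q:ℝ)^n) ^ κ := by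
          rw [Real.rpow_add' hqn0 (by linarith), Real.rpow_one]
        -- (b^n)^(1+κ) * (q^n)^κ ≤ 1
        have e6 : ((b:ℝ)^n) ^ (1+κ) * ((q:ℝ)^n) ^ κ ≤ 1 := by
          rw [hqn n, ← Real.rpow_mul hbpos.le, ← Real.rpow_natCast b n,
            ← Real.rpow_mul hbpos.le, ← Real.rpow_add hbpos]
          refine Real.rpow_le_one_of_one_le_of_nonpos hb1 ?_
          have hκσ : 1 - κ/σ ≤ 0 := by
            have : 1 ≤ κ/σ := (one_le_div hσ).mpr hσκ
            linarith
          have hrw : (n:ℝ) * (1+κ) + -((1+κ)/σ) * n * κ = (n * (1+κ)) * (1 - κ/σ) := by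
            field_simp; ring
          rw [hrw]
          have hn0 : (0:ℝ) ≤ (n:ℝ) * (1+κ) := by positivity
          exact mul_nonpos_of_nonneg_of_nonpos hn0 hκσ
        have e7 : E 0 ^ κ ≤ E 0 ^ σ := rpow_le_rpow_exp_ge' (hEnn 0) hE0le1 hσ hσκ
        -- M^(1+κ) * (2M)^(-(1+κ)) ≤ 1/2
        have e8 : M ^ (1+κ) * (2*M) ^ (-(1+κ)) ≤ 1/2 := by
          rw [Real.rpow_neg h2Mpos.le, ← div_eq_mul_inv,
            ← Real.div_rpow hMpos.le h2Mpos.le]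
          have hMdiv : M / (2*M) = 1/2 := by
            rw [div_eq_iff (ne_of_gt h2Mpos)]; ring
          rw [hMdiv]
          have h9 : ((1:ℝ)/2) ^ (1+κ) ≤ ((1:ℝ)/2) ^ (1:ℝ) :=
            Real.rpow_le_rpow_of_exponent_ge (by norm_num) (by norm_num) (by linarith)
          rw [Real.rpow_one] at h9
          exact h9
        calc Z (n+1) ^ (1+κ)
            ≤ M ^ (1+κ) * ((b:ℝ)^n) ^ (1+κ) * (E 0 ^ (1+κ) * ((q:ℝ)^n) ^ (1+κ)) :=
              (e1.trans e2).trans_eq e3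
          _ = (M ^ (1+κ) * E 0 ^ κ) * (((b:ℝ)^n) ^ (1+κ) * ((q:ℝ)^n) ^ κ) * (E 0 * q ^ n) := by
              rw [e4, e5]; ring
          _ ≤ (M ^ (1+κ) * E 0 ^ κ) * 1 * (E 0 * q ^ n) := by
              refine mul_le_mul_of_nonneg_right (mul_le_mul_of_nonneg_left e6 ?_) hA0
              exact mul_nonneg (Real.rpow_nonneg hMpos.le _) (Real.rpow_nonneg (hEnn 0) _)
          _ ≤ (M ^ (1+κ) * ((2*M) ^ (-(1+κ)) * q)) * 1 * (E 0 * q ^ n) := by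
              have h10 : E 0 ^ κ ≤ (2*M) ^ (-(1+κ)) * q := e7.trans hE0σ
              have h11 : (0:ℝ) ≤ M ^ (1+κ) := Real.rpow_nonneg hMpos.le _
              exact mul_le_mul_of_nonneg_right
                (mul_le_mul_of_nonneg_right
                  (mul_le_mul_of_nonneg_left h10 h11) zero_le_one) hA0
          _ ≤ (1/2) * (E 0 * q ^ (n+1)) := by
              have h12 : M ^ (1+κ) * ((2*M) ^ (-(1+κ)) * q) ≤ (1/2) * q :=
                calc M ^ (1+κ) * ((2*M) ^ (-(1+κ)) * q)
                    = (M ^ (1+κ) * (2*M) ^ (-(1+κ))) * q := by ring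
                  _ ≤ (1/2) * q := mul_le_mul_of_nonneg_right e8 hq0.le
              calc (M ^ (1+κ) * ((2*M) ^ (-(1+κ)) * q)) * 1 * (E 0 * q ^ n)
                  = (M ^ (1+κ) * ((2*M) ^ (-(1+κ)) * q)) * (E 0 * q ^ n) := by ring
                _ ≤ ((1/2) * q) * (E 0 * q ^ n) := mul_le_mul_of_nonneg_right h12 hA0
                _ = (1/2) * (E 0 * q ^ (n+1)) := by rw [pow_succ]; ring
      calc E (n+1) = Y (n+1) + Z (n+1) ^ (1+κ) := rfl
        _ ≤ (1/2) * (E 0 * q ^ (n+1)) + (1/2) * (E 0 * q ^ (n+1)) := add_le_add hYb hZb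
        _ = E 0 * q ^ (n+1) := by ring
  -- conclude
  have hEtend : Tendsto (fun n => E 0 * q ^ n) atTop (nhds 0) := by
    have := (tendsto_pow_atTop_nhds_zero_of_lt_one hq0.le hq1).const_mul (E 0)
    simpa using this
  have hYtend : Tendsto Y atTop (nhds 0) :=
    squeeze_zero hY (fun n => (hYE n).trans (hmain n)) hEtend
  refine ⟨hYtend, ?_⟩
  -- Z n ≤ (E 0 * q^n) ^ (1+κ)⁻¹
  have h1κ : (0:ℝ) < 1 + κ := by linarith
  set q2 : ℝ := q ^ ((1+κ)⁻¹) with hq2def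
  have hq20 : 0 ≤ q2 := (Real.rpow_pos_of_pos hq0 _).le
  have hq21 : q2 < 1 := Real.rpow_lt_one hq0.le hq1 (by positivity)
  have hZle : ∀ n, Z n ≤ E 0 ^ ((1+κ)⁻¹) * q2 ^ n := by
    intro n
    have h1 : Z n = (Z n ^ (1+κ)) ^ ((1+κ)⁻¹) :=
      (Real.rpow_rpow_inv (hZ n) (ne_of_gt h1κ)).symm
    have h2 : (Z n ^ (1+κ)) ^ ((1+κ)⁻¹) ≤ (E 0 * q ^ n) ^ ((1+κ)⁻¹) :=
      Real.rpow_le_rpow (Real.rpow_nonneg (hZ n) _) ((hZE n).trans (hmain n))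
        (by positivity)
    have h3 : (E 0 * q ^ n) ^ ((1+κ)⁻¹) = E 0 ^ ((1+κ)⁻¹) * q2 ^ n := by
      rw [Real.mul_rpow (hEnn 0) (pow_pos hq0 n).le, hq2def,
        ← Real.rpow_natCast q n, ← Real.rpow_mul hq0.le, mul_comm ((n:ℝ)),
        Real.rpow_mul hq0.le, Real.rpow_natCast]
    rw [h1]
    exact h2.trans_eq h3
  have : Tendsto (fun n => E 0 ^ ((1+κ)⁻¹) * q2 ^ n) atTop (nhds 0) := by
    have := (tendsto_pow_atTop_nhds_zero_of_lt_one hq20 hq21).const_mul (E 0 ^ ((1+κ)⁻¹))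
    simpa using this
  exact squeeze_zero hZ hZle this
end

section
/- (BMO embedding of critical fractional Sobolev space) Let Q = 2N+2 and p ∈ (Q, ∞). Then there is a constant C = C(N,p) such that for every u ∈ W^{Q/p,p}(ℍᴺ): [u]_{BMO(ℍᴺ)} ≤ C [u]_{W^{Q/p,p}(ℍᴺ)}. -/
open MeasureTheory Real Filter
open scoped ENNReal Topology

noncomputable section

/-- Points of the Heisenberg group `ℍᴺ = ℝᴺ × ℝᴺ × ℝ`. -/
abbrev H (N : ℕ) := (Fin N → ℝ) × (Fin N → ℝ) × ℝ

namespace Heis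

/-- Heisenberg group multiplication. -/
def hmul {N : ℕ} (a b : H N) : H N :=
  (a.1 + b.1, a.2.1 + b.2.1,
    a.2.2 + b.2.2 + 2 * (∑ i, b.1 i * a.2.1 i) - 2 * (∑ i, a.1 i * b.2.1 i))

/-- Heisenberg group inverse. -/
def hinv {N : ℕ} (a : H N) : H N := (-a.1, -a.2.1, -a.2.2)

/-- The homogeneous norm `|ξ| = (|z|⁴ + s²)^{1/4}`. -/
def hnorm {N : ℕ} (a : H N) : ℝ :=
  (((∑ i, (a.1 i)^2) + (∑ i, (a.2.1 i)^2))^2 + (a.2.2)^2) ^ ((4:ℝ)⁻¹)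

/-- `hdist a b = |a⁻¹ ∘ b|`. -/
def hdist {N : ℕ} (a b : H N) : ℝ := hnorm (hmul (hinv a) b)

/-- The ball `B(c,r) = {ξ : |c⁻¹∘ξ| < r}`. -/
def ball {N : ℕ} (c : H N) (r : ℝ) : Set (H N) := {x | hdist c x < r}

/-- Homogeneous dimension `Q = 2N+2` as a real number. -/
def QQ (N : ℕ) : ℝ := 2*N + 2

/-- BMO seminorm `[f]_{BMO} = sup_B ⨍_B |f − f_B|`. -/
def bmoSemi (N : ℕ) (f : H N → ℝ) : ℝ :=
  sSup {c | ∃ (ξ₀ : H N) (ρ : ℝ), 0 < ρ ∧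
    c = ⨍ ξ in ball ξ₀ ρ, |f ξ - ⨍ η in ball ξ₀ ρ, f η|}

lemma hmul_middle {N : ℕ} (η c ξ : H N) :
    hmul (hmul (hinv η) c) (hmul (hinv c) ξ) = hmul (hinv η) ξ := by
  simp only [hmul, hinv]
  refine Prod.ext (by funext i; simp) (Prod.ext (by funext i; simp) ?_)
  simp only [Pi.add_apply, Pi.neg_apply, add_mul, mul_add, neg_mul, mul_neg,
    Finset.sum_add_distrib, Finset.sum_neg_distrib]
  ring

lemma hmul_hinv_symm {N : ℕ} (a b : H N) : hmul (hinv a) b = hinv (hmul (hinv b) a) := by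
  simp only [hmul, hinv]
  refine Prod.ext (by funext i; simp) (Prod.ext (by funext i; simp) ?_)
  simp only [Pi.neg_apply, neg_mul, mul_neg, Finset.sum_neg_distrib, neg_neg]
  ring

lemma hnorm_hinv {N : ℕ} (a : H N) : hnorm (hinv a) = hnorm a := by
  simp [hnorm, hinv, neg_sq]

lemma hdist_comm {N : ℕ} (a b : H N) : hdist a b = hdist b a := by
  rw [hdist, hmul_hinv_symm, hnorm_hinv, hdist]

lemma hnorm_nonneg {N : ℕ} (a : H N) : 0 ≤ hnorm a :=
  Real.rpow_nonneg (by positivity) _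

lemma base_nonneg {N : ℕ} (a : H N) :
    0 ≤ ((∑ i, (a.1 i)^2) + (∑ i, (a.2.1 i)^2))^2 + (a.2.2)^2 := by positivity

lemma hnorm_pow_four {N : ℕ} (a : H N) :
    hnorm a ^ 4 = ((∑ i, (a.1 i)^2) + (∑ i, (a.2.1 i)^2))^2 + (a.2.2)^2 := by
  rw [hnorm]
  exact Real.rpow_inv_natCast_pow (base_nonneg a) (by norm_num)

lemma hnorm_lt_iff {N : ℕ} (a : H N) {ρ : ℝ} (hρ : 0 < ρ) :
    hnorm a < ρ ↔ ((∑ i, (a.1 i)^2) + (∑ i, (a.2.1 i)^2))^2 + (a.2.2)^2 < ρ^4 := by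
  rw [← hnorm_pow_four a]
  exact (pow_lt_pow_iff_left₀ (hnorm_nonneg a) hρ.le (by norm_num)).symm

lemma eq_of_hdist_eq_zero {N : ℕ} {a b : H N} (h : hdist a b = 0) : a = b := by
  have h4 : hnorm (hmul (hinv a) b) ^ 4 = 0 := by rw [hdist] at h; rw [h]; norm_num
  rw [hnorm_pow_four] at h4
  set z := hmul (hinv a) b with hz
  have h1 : ((∑ i, (z.1 i)^2) + (∑ i, (z.2.1 i)^2)) = 0 ∧ z.2.2 = 0 := by
    constructor <;> nlinarith [sq_nonneg ((∑ i, (z.1 i)^2) + (∑ i, (z.2.1 i)^2)), sq_nonneg z.2.2,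
      Finset.sum_nonneg (fun i (_ : i ∈ Finset.univ) => sq_nonneg (z.1 i)),
      Finset.sum_nonneg (fun i (_ : i ∈ Finset.univ) => sq_nonneg (z.2.1 i))]
  have hx : ∀ i, z.1 i = 0 := by
    intro i
    have h2 : (∑ i, (z.1 i)^2) = 0 := by
      nlinarith [Finset.sum_nonneg (fun i (_ : i ∈ Finset.univ) => sq_nonneg (z.1 i)),
        Finset.sum_nonneg (fun i (_ : i ∈ Finset.univ) => sq_nonneg (z.2.1 i))]
    have := (Finset.sum_eq_zero_iff_of_nonneg
      (fun i (_ : i ∈ Finset.univ) => sq_nonneg (z.1 i))).1 h2 i (Finset.mem_univ i)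
    nlinarith [this]
  have hy : ∀ i, z.2.1 i = 0 := by
    intro i
    have h2 : (∑ i, (z.2.1 i)^2) = 0 := by
      nlinarith [Finset.sum_nonneg (fun i (_ : i ∈ Finset.univ) => sq_nonneg (z.1 i)),
        Finset.sum_nonneg (fun i (_ : i ∈ Finset.univ) => sq_nonneg (z.2.1 i))]
    have := (Finset.sum_eq_zero_iff_of_nonneg
      (fun i (_ : i ∈ Finset.univ) => sq_nonneg (z.2.1 i))).1 h2 i (Finset.mem_univ i)
    nlinarith [this]
  -- now deduce a = b
  have e1 : b.1 = a.1 := by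
    funext i; have := hx i; simp [hz, hmul, hinv] at this; linarith
  have e2 : b.2.1 = a.2.1 := by
    funext i; have := hy i; simp [hz, hmul, hinv] at this; linarith
  have e3 : b.2.2 = a.2.2 := by
    have h3 := h1.2
    simp only [hz, hmul, hinv, e1, e2] at h3
    simp only [Pi.neg_apply, neg_mul, mul_neg, Finset.sum_neg_distrib] at h3
    linarith
  exact Prod.ext e1.symm (Prod.ext e2.symm e3.symm)

private lemma amgm {x y u : ℝ} (hx : 0 ≤ x) (hy : 0 ≤ y) (h : u^2 ≤ x*y) : 2*u ≤ x + y := by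
  nlinarith [sq_nonneg (x - y), sq_nonneg (x + y - 2*u)]

private lemma abs_le' {s v : ℝ} (hv : 0 ≤ v) (h : s^2 ≤ v^2) : -v ≤ s ∧ s ≤ v := by
  constructor <;> nlinarith [sq_nonneg (s+v), sq_nonneg (s-v)]

set_option maxHeartbeats 1000000 in
lemma hnorm_hmul_le {N : ℕ} (a b : H N) : hnorm (hmul a b) ≤ 2 * (hnorm a + hnorm b) := by
  have A0 : 0 ≤ hnorm a := hnorm_nonneg a
  have B0 : 0 ≤ hnorm b := hnorm_nonneg b
  set A := hnorm a with hA
  set B := hnorm b with hB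
  set Pa := ∑ i, (a.1 i)^2 with hPa
  set Qa := ∑ i, (a.2.1 i)^2 with hQa
  set Pb := ∑ i, (b.1 i)^2 with hPb
  set Qb := ∑ i, (b.2.1 i)^2 with hQb
  have Pa0 : 0 ≤ Pa := Finset.sum_nonneg fun i _ => sq_nonneg _
  have Qa0 : 0 ≤ Qa := Finset.sum_nonneg fun i _ => sq_nonneg _
  have Pb0 : 0 ≤ Pb := Finset.sum_nonneg fun i _ => sq_nonneg _
  have Qb0 : 0 ≤ Qb := Finset.sum_nonneg fun i _ => sq_nonneg _
  have hA4 : (Pa + Qa)^2 + (a.2.2)^2 = A^4 := (hnorm_pow_four a).symm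
  have hB4 : (Pb + Qb)^2 + (b.2.2)^2 = B^4 := (hnorm_pow_four b).symm
  have hPQa : Pa + Qa ≤ A^2 :=
    (abs_le' (sq_nonneg A) (by linarith only [hA4, sq_nonneg a.2.2])).2
  have hPQb : Pb + Qb ≤ B^2 :=
    (abs_le' (sq_nonneg B) (by linarith only [hB4, sq_nonneg b.2.2])).2
  have hsa := abs_le' (sq_nonneg A)
    (show a.2.2^2 ≤ (A^2)^2 by linarith only [hA4, sq_nonneg (Pa+Qa)])
  have hsb := abs_le' (sq_nonneg B)
    (show b.2.2^2 ≤ (B^2)^2 by linarith only [hB4, sq_nonneg (Pb+Qb)])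
  set U := ∑ i, a.1 i * b.1 i with hU
  set V := ∑ i, a.2.1 i * b.2.1 i with hV
  set T1 := ∑ i, b.1 i * a.2.1 i with hT1
  set T2 := ∑ i, a.1 i * b.2.1 i with hT2
  have hU2 : U^2 ≤ Pa * Pb := Finset.sum_mul_sq_le_sq_mul_sq _ _ _
  have hV2 : V^2 ≤ Qa * Qb := Finset.sum_mul_sq_le_sq_mul_sq _ _ _
  have hT12 : T1^2 ≤ Pb * Qa := Finset.sum_mul_sq_le_sq_mul_sq _ _ _
  have hT22 : T2^2 ≤ Pa * Qb := Finset.sum_mul_sq_le_sq_mul_sq _ _ _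
  have e1 : ∑ i, ((hmul a b).1 i)^2 = Pa + 2*U + Pb := by
    simp only [hmul, Pi.add_apply, add_sq, Finset.sum_add_distrib, hPa, hPb, hU, mul_assoc,
      ← Finset.mul_sum]
  have e2 : ∑ i, ((hmul a b).2.1 i)^2 = Qa + 2*V + Qb := by
    simp only [hmul, Pi.add_apply, add_sq, Finset.sum_add_distrib, hQa, hQb, hV, mul_assoc,
      ← Finset.mul_sum]
  have e3 : (hmul a b).2.2 = a.2.2 + b.2.2 + 2*T1 - 2*T2 := by
    simp only [hmul, hT1, hT2]
  have key : ((∑ i, ((hmul a b).1 i)^2) + (∑ i, ((hmul a b).2.1 i)^2))^2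
      + ((hmul a b).2.2)^2 ≤ (2*(A+B))^4 := by
    rw [e1, e2, e3]
    have paA : Pa ≤ A^2 := by linarith
    have qaA : Qa ≤ A^2 := by linarith
    have pbB : Pb ≤ B^2 := by linarith
    have qbB : Qb ≤ B^2 := by linarith
    have prod1 : Pb * Qa ≤ A^2 * B^2 :=
      le_trans (mul_le_mul pbB qaA Qa0 (sq_nonneg B)) (le_of_eq (mul_comm _ _))
    have prod2 : Pa * Qb ≤ A^2 * B^2 := mul_le_mul paA qbB Qb0 (sq_nonneg A)
    have c1 : 2*U ≤ Pa + Pb := amgm Pa0 Pb0 hU2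
    have c1' : -(Pa + Pb) ≤ 2*U := by
      have := amgm Pa0 Pb0 (u := -U) (by rw [neg_sq]; exact hU2); linarith
    have c2 : 2*V ≤ Qa + Qb := amgm Qa0 Qb0 hV2
    have c2' : -(Qa + Qb) ≤ 2*V := by
      have := amgm Qa0 Qb0 (u := -V) (by rw [neg_sq]; exact hV2); linarith
    have z1 : Pa + 2*U + Pb + (Qa + 2*V + Qb) ≤ 2*(A^2 + B^2) := by
      linarith only [c1, c2, hPQa, hPQb]
    have z0 : 0 ≤ Pa + 2*U + Pb + (Qa + 2*V + Qb) := by linarith only [c1', c2']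
    have t1 : 2*T1 ≤ A^2 + B^2 :=
      amgm (sq_nonneg A) (sq_nonneg B) (hT12.trans prod1)
    have t1' : -(A^2 + B^2) ≤ 2*T1 := by
      have := amgm (sq_nonneg A) (sq_nonneg B) (u := -T1)
        (by rw [neg_sq]; exact hT12.trans prod1); linarith
    have t2 : 2*T2 ≤ A^2 + B^2 :=
      amgm (sq_nonneg A) (sq_nonneg B) (hT22.trans prod2)
    have t2' : -(A^2 + B^2) ≤ 2*T2 := by
      have := amgm (sq_nonneg A) (sq_nonneg B) (u := -T2)
        (by rw [neg_sq]; exact hT22.trans prod2); linarith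
    have s1 : a.2.2 + b.2.2 + 2*T1 - 2*T2 ≤ 3*(A^2 + B^2) := by
      have := hsa.2; have := hsb.2; linarith
    have s2 : -(3*(A^2 + B^2)) ≤ a.2.2 + b.2.2 + 2*T1 - 2*T2 := by
      have := hsa.1; have := hsb.1; linarith
    have k0 : 0 ≤ A^2 + B^2 := by positivity
    have sq1 : (Pa + 2*U + Pb + (Qa + 2*V + Qb))^2 ≤ (2*(A^2+B^2))^2 :=
      pow_le_pow_left₀ z0 z1 2
    have sq2 : (a.2.2 + b.2.2 + 2*T1 - 2*T2)^2 ≤ (3*(A^2+B^2))^2 := sq_le_sq' s2 s1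
    have ab1 : A^2 + B^2 ≤ (A+B)^2 := by linarith only [mul_nonneg A0 B0]
    have ab2 : (A^2 + B^2)^2 ≤ ((A+B)^2)^2 := pow_le_pow_left₀ k0 ab1 2
    have f0 : 0 ≤ ((A+B)^2)^2 := by positivity
    linarith only [sq1, sq2, ab2, f0]
  have : hnorm (hmul a b) ≤ ((2*(A+B))^4) ^ ((4:ℝ)⁻¹) := by
    rw [hnorm]
    exact Real.rpow_le_rpow (base_nonneg _) key (by norm_num)
  rwa [← Real.rpow_natCast ((2*(A+B))) 4, ← Real.rpow_mul (by positivity), (by norm_num :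
    ((4:ℕ):ℝ) * (4:ℝ)⁻¹ = 1), Real.rpow_one] at this

lemma measurePreserving_hmul {N : ℕ} (a : H N) :
    MeasurePreserving (hmul a) (volume : Measure (H N)) volume := by
  have hvol : (volume : Measure (H N)) =
      (volume : Measure (Fin N → ℝ)).prod ((volume : Measure (Fin N → ℝ)).prod volume) := by
    rw [MeasureTheory.Measure.volume_eq_prod, MeasureTheory.Measure.volume_eq_prod]
  -- inner shear on (Fin N → ℝ) × ℝ for fixed x
  have inner : ∀ x : Fin N → ℝ, MeasurePreserving
      (fun ys : (Fin N → ℝ) × ℝ =>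
        (ys.1, ys.2 + (2 * (∑ i, x i * a.2.1 i) - 2 * (∑ i, a.1 i * ys.1 i))))
      ((volume : Measure (Fin N → ℝ)).prod volume)
      ((volume : Measure (Fin N → ℝ)).prod volume) := by
    intro x
    exact MeasurePreserving.skew_product (μd := volume)
      (g := fun (y : Fin N → ℝ) (s : ℝ) => s + (2 * (∑ i, x i * a.2.1 i) - 2 * (∑ i, a.1 i * y i)))
      (MeasurePreserving.id volume) (by fun_prop)
      (Filter.Eventually.of_forall fun y => (measurePreserving_add_right volume _).map_eq)
  -- full shear
  have shear : MeasurePreserving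
      (fun q : H N => (q.1, (q.2.1, q.2.2 + (2 * (∑ i, q.1 i * a.2.1 i)
        - 2 * (∑ i, a.1 i * q.2.1 i)))))
      ((volume : Measure (Fin N → ℝ)).prod ((volume : Measure (Fin N → ℝ)).prod volume))
      ((volume : Measure (Fin N → ℝ)).prod ((volume : Measure (Fin N → ℝ)).prod volume)) := by
    exact MeasurePreserving.skew_product (μd := (volume : Measure (Fin N → ℝ)).prod volume)
      (g := fun (x : Fin N → ℝ) (ys : (Fin N → ℝ) × ℝ) =>
        (ys.1, ys.2 + (2 * (∑ i, x i * a.2.1 i) - 2 * (∑ i, a.1 i * ys.1 i))))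
      (MeasurePreserving.id volume) (by fun_prop)
      (Filter.Eventually.of_forall fun x => (inner x).map_eq)
  have trans : MeasurePreserving (fun q : H N => a + q) (volume : Measure (H N)) volume := by
    have : (fun q : H N => a + q) =
        Prod.map (fun x : Fin N → ℝ => a.1 + x)
          (Prod.map (fun y : Fin N → ℝ => a.2.1 + y) (fun s : ℝ => a.2.2 + s)) := rfl
    rw [this, hvol]
    exact (measurePreserving_add_left volume a.1).prod
      ((measurePreserving_add_left volume a.2.1).prod (measurePreserving_add_left volume a.2.2))
  have comp : hmul a = (fun q : H N => a + q) ∘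
      (fun q : H N => (q.1, (q.2.1, q.2.2 + (2 * (∑ i, q.1 i * a.2.1 i)
        - 2 * (∑ i, a.1 i * q.2.1 i))))) := by
    funext q
    refine Prod.ext rfl (Prod.ext rfl ?_)
    simp [hmul]
    ring
  rw [comp]
  rw [← hvol] at shear
  exact trans.comp shear

lemma continuous_hnorm {N : ℕ} : Continuous (hnorm (N := N)) := by
  apply Continuous.rpow_const
  · fun_prop
  · exact fun x => Or.inr (by norm_num)

lemma continuous_hmul_left {N : ℕ} (a : H N) : Continuous (hmul a) := by
  unfold hmul; fun_prop

lemma isOpen_ball {N : ℕ} (c : H N) (ρ : ℝ) : IsOpen (ball c ρ) := by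
  have : ball c ρ = (fun x => hnorm (hmul (hinv c) x)) ⁻¹' Set.Iio ρ := rfl
  rw [this]
  exact (continuous_hnorm.comp (continuous_hmul_left _)).isOpen_preimage _ isOpen_Iio

lemma measurableSet_ball {N : ℕ} (c : H N) (ρ : ℝ) : MeasurableSet (ball c ρ) :=
  (isOpen_ball c ρ).measurableSet

lemma volume_ball_eq {N : ℕ} (c : H N) (ρ : ℝ) :
    volume (ball c ρ) = volume {x : H N | hnorm x < ρ} := by
  have h : ball c ρ = (hmul (hinv c)) ⁻¹' {x : H N | hnorm x < ρ} := rfl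
  rw [h]
  exact (measurePreserving_hmul (hinv c)).measure_preimage
    ((continuous_hnorm.isOpen_preimage _ isOpen_Iio).measurableSet.nullMeasurableSet)

private lemma abs_lt'' {x y : ℝ} (hy : 0 ≤ y) (h : x^2 < y^2) : -y < x ∧ x < y := by
  constructor <;> nlinarith [sq_nonneg (x+y), sq_nonneg (x-y)]

lemma volume_box {N : ℕ} {b1 b2 : ℝ} (h1 : 0 ≤ b1) (h2 : 0 ≤ b2) :
    volume ((Set.univ.pi fun _ : Fin N => Set.Ioo (-b1) b1) ×ˢ
      ((Set.univ.pi fun _ : Fin N => Set.Ioo (-b1) b1) ×ˢ Set.Ioo (-b2) b2)) =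
    ENNReal.ofReal ((2*b1)^(2*N) * (2*b2)) := by
  rw [MeasureTheory.Measure.volume_eq_prod, Measure.prod_prod,
    MeasureTheory.Measure.volume_eq_prod, Measure.prod_prod, volume_pi_pi]
  simp only [Real.volume_Ioo]
  rw [Finset.prod_const, Finset.card_univ, Fintype.card_fin]
  have e1 : b1 - -b1 = 2*b1 := by ring
  have e2 : b2 - -b2 = 2*b2 := by ring
  have e3 : (2*b1)^(2*N) * (2*b2) = (2*b1)^N * ((2*b1)^N * (2*b2)) := by ring
  rw [e1, e2, e3, ← ENNReal.ofReal_pow (by positivity : (0:ℝ) ≤ 2*b1),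
    ← ENNReal.ofReal_mul (by positivity : (0:ℝ) ≤ (2*b1)^N),
    ← ENNReal.ofReal_mul (by positivity : (0:ℝ) ≤ (2*b1)^N)]

lemma volume_ball_lower {N : ℕ} (hN : 1 ≤ N) (c : H N) {ρ : ℝ} (hρ : 0 < ρ) :
    ENNReal.ofReal ((ρ/N)^(2*N) * ρ^2) ≤ volume (ball c ρ) := by
  have hNR : (0:ℝ) < N := by exact_mod_cast hN
  have hN1 : (1:ℝ) ≤ N := by exact_mod_cast hN
  set b : ℝ := ρ/(2*N) with hb
  have hb0 : 0 < b := by positivity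
  set box : Set (H N) := (Set.univ.pi fun _ : Fin N => Set.Ioo (-b) b) ×ˢ
    ((Set.univ.pi fun _ : Fin N => Set.Ioo (-b) b) ×ˢ Set.Ioo (-(ρ^2/2)) (ρ^2/2)) with hbox
  have hsub : box ⊆ {x : H N | hnorm x < ρ} := by
    rintro ⟨x, y, s⟩ ⟨hx, hy, hs⟩
    simp only [Set.mem_pi, Set.mem_univ, forall_true_left, Set.mem_Ioo] at hx hy hs
    have hsum : ∀ (f : Fin N → ℝ), (∀ i, -b < f i ∧ f i < b) → ∑ i, (f i)^2 ≤ ρ^2/4 := by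
      intro f hf
      have h1 : ∑ i, (f i)^2 ≤ ∑ _i : Fin N, b^2 :=
        Finset.sum_le_sum fun i _ => sq_le_sq' (hf i).1.le (hf i).2.le
      have h2 : ∑ _i : Fin N, b^2 = N * b^2 := by
        rw [Finset.sum_const, Finset.card_univ, Fintype.card_fin, nsmul_eq_mul]
      have h3 : (N:ℝ) * b^2 ≤ ρ^2/4 := by
        rw [hb, div_pow, mul_pow]
        have e : (N:ℝ) * (ρ^2 / ((2:ℝ)^2 * (N:ℝ)^2)) = ρ^2 / (4*N) := by
          field_simp
          ring
        rw [e, div_le_div_iff₀ (by positivity) (by norm_num)]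
        nlinarith [sq_nonneg ρ]
      linarith
    have hx2 := hsum x fun i => ⟨(hx i).1, (hx i).2⟩
    have hy2 := hsum y fun i => ⟨(hy i).1, (hy i).2⟩
    have hs2 : s^2 < ρ^4/4 := by nlinarith [hs.1, hs.2, sq_nonneg ρ]
    have hsumnn : (0:ℝ) ≤ (∑ i, x i ^2) + ∑ i, y i ^2 := by positivity
    show hnorm (x, y, s) < ρ
    rw [hnorm_lt_iff _ hρ]
    have hsq : ((∑ i, x i ^2) + ∑ i, y i ^2)^2 ≤ (ρ^2/2)^2 :=
      sq_le_sq' (by linarith) (by linarith)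
    simp only
    nlinarith [pow_pos hρ 4]
  have hvol : volume box = ENNReal.ofReal ((2*b)^(2*N) * (2*(ρ^2/2))) :=
    volume_box hb0.le (by positivity)
  have e4 : (2*b)^(2*N) * (2*(ρ^2/2)) = (ρ/N)^(2*N) * ρ^2 := by
    rw [hb]
    have : 2 * (ρ/(2*N)) = ρ/N := by field_simp
    rw [this]
    ring
  calc ENNReal.ofReal ((ρ/N)^(2*N) * ρ^2) = volume box := by rw [hvol, e4]
    _ ≤ volume {x : H N | hnorm x < ρ} := measure_mono hsub
    _ = volume (ball c ρ) := (volume_ball_eq c ρ).symm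

lemma volume_ball_upper {N : ℕ} (c : H N) {ρ : ℝ} (hρ : 0 < ρ) :
    volume (ball c ρ) ≤ ENNReal.ofReal ((2*ρ)^(2*N) * (2*ρ^2)) := by
  set box : Set (H N) := (Set.univ.pi fun _ : Fin N => Set.Ioo (-ρ) ρ) ×ˢ
    ((Set.univ.pi fun _ : Fin N => Set.Ioo (-ρ) ρ) ×ˢ Set.Ioo (-(ρ^2)) (ρ^2)) with hbox
  have hsub : {x : H N | hnorm x < ρ} ⊆ box := by
    rintro ⟨x, y, s⟩ hmem
    have h := (hnorm_lt_iff (⟨x, y, s⟩ : H N) hρ).1 hmem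
    simp only at h
    have hxnn : (0:ℝ) ≤ ∑ i, x i ^2 := by positivity
    have hynn : (0:ℝ) ≤ ∑ i, y i ^2 := by positivity
    have hsum2 : ((∑ i, x i ^2) + ∑ i, y i ^2)^2 < (ρ^2)^2 := by nlinarith [sq_nonneg s]
    have hsum : (∑ i, x i ^2) + ∑ i, y i ^2 < ρ^2 := (abs_lt'' (sq_nonneg ρ) hsum2).2
    have hs : s^2 < (ρ^2)^2 := by
      nlinarith [sq_nonneg ((∑ i, x i ^2) + ∑ i, y i ^2)]
    refine ⟨?_, ?_, ?_⟩
    · intro i _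
      have hlt : x i ^ 2 < ρ^2 := by
        have hle : x i ^2 ≤ ∑ j, x j ^2 :=
          Finset.single_le_sum (fun j _ => sq_nonneg (x j)) (Finset.mem_univ i)
        linarith
      exact Set.mem_Ioo.2 (abs_lt'' hρ.le hlt)
    · intro i _
      have hlt : y i ^ 2 < ρ^2 := by
        have hle : y i ^2 ≤ ∑ j, y j ^2 :=
          Finset.single_le_sum (fun j _ => sq_nonneg (y j)) (Finset.mem_univ i)
        linarith
      exact Set.mem_Ioo.2 (abs_lt'' hρ.le hlt)
    · exact Set.mem_Ioo.2 (abs_lt'' (sq_nonneg ρ) hs)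
  have hvol : volume box = ENNReal.ofReal ((2*ρ)^(2*N) * (2*ρ^2)) :=
    volume_box hρ.le (by positivity)
  calc volume (ball c ρ) = volume {x : H N | hnorm x < ρ} := volume_ball_eq c ρ
    _ ≤ volume box := measure_mono hsub
    _ = ENNReal.ofReal ((2*ρ)^(2*N) * (2*ρ^2)) := hvol

lemma hdist_lt_of_mem_ball {N : ℕ} {ξ₀ ξ η : H N} {ρ : ℝ}
    (hξ : ξ ∈ ball ξ₀ ρ) (hη : η ∈ ball ξ₀ ρ) : hdist η ξ ≤ 4 * ρ := by
  have h1 : hdist ξ₀ ξ < ρ := hξ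
  have h2 : hdist ξ₀ η < ρ := hη
  have key : hdist η ξ ≤ 2 * (hdist η ξ₀ + hdist ξ₀ ξ) := by
    have := hnorm_hmul_le (hmul (hinv η) ξ₀) (hmul (hinv ξ₀) ξ)
    rw [hmul_middle] at this
    exact this
  rw [hdist_comm η ξ₀] at key
  linarith

/-- BMO embedding of the critical fractional Sobolev space. -/
theorem bmo_embedding (N : ℕ) (hN : 1 ≤ N) (p : ℝ) (hp : QQ N < p) :
    ∃ C : ℝ, 0 < C ∧
      ∀ u : H N → ℝ,
        MemLp u (ENNReal.ofReal p) volume →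
        (∫⁻ ξ, ∫⁻ η, ENNReal.ofReal
            (|u ξ - u η| ^ p / hdist η ξ ^ (QQ N + (QQ N / p) * p))) < ⊤ →
        bmoSemi N u
          ≤ C * ((∫⁻ ξ, ∫⁻ η, ENNReal.ofReal
              (|u ξ - u η| ^ p / hdist η ξ ^ (QQ N + (QQ N / p) * p))).toReal) ^ (1/p) := by
  have hNR : (0:ℝ) < N := by exact_mod_cast hN
  have hQ4 : (4:ℝ) ≤ QQ N := by
    rw [QQ]; have : (1:ℝ) ≤ N := by exact_mod_cast hN
    linarith
  have hp1 : 1 < p := by linarith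
  have hp0 : 0 < p := by linarith
  set C : ℝ := ((4:ℝ)^(4*N+4) * (N:ℝ)^(4*N)) ^ (1/p) with hC
  have hC0 : 0 < C := Real.rpow_pos_of_pos (by positivity) _
  refine ⟨C, hC0, ?_⟩
  intro u hu hfin
  set D := QQ N + QQ N / p * p with hD
  have hD2 : D = 2 * QQ N := by rw [hD, div_mul_cancel₀ _ (ne_of_gt hp0)]; ring
  have hD0 : 0 ≤ D := by rw [hD2]; linarith
  have hDnat : D = ((4*N+4 : ℕ) : ℝ) := by rw [hD2, QQ]; push_cast; ring
  set X := ∫⁻ ξ, ∫⁻ η, ENNReal.ofReal (|u ξ - u η| ^ p / hdist η ξ ^ D) with hX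
  have hXt : X ≠ ⊤ := hfin.ne
  rw [bmoSemi]
  apply Real.sSup_le
  swap
  · exact mul_nonneg hC0.le (Real.rpow_nonneg ENNReal.toReal_nonneg _)
  rintro x ⟨ξ₀, ρ, hρ, rfl⟩
  set B := ball ξ₀ ρ with hB
  set ν := volume.restrict B with hν
  set V := volume B with hV
  have hVlo : ENNReal.ofReal ((ρ/N)^(2*N) * ρ^2) ≤ V := volume_ball_lower hN ξ₀ hρ
  have hLo0 : (0:ℝ) < (ρ/N)^(2*N) * ρ^2 := by positivity
  have hVpos : 0 < V := lt_of_lt_of_le (ENNReal.ofReal_pos.2 hLo0) hVlo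
  have hV0 : V ≠ 0 := hVpos.ne'
  have hVt : V ≠ ⊤ := (lt_of_le_of_lt (volume_ball_upper ξ₀ hρ) ENNReal.ofReal_lt_top).ne
  set m := V.toReal with hm
  have hm0 : 0 < m := ENNReal.toReal_pos hV0 hVt
  haveI hfin' : IsFiniteMeasure ν := by
    constructor
    rw [hν, Measure.restrict_apply_univ]
    exact lt_top_iff_ne_top.2 hVt
  have hui : Integrable u ν := by
    have h1 : MemLp u (ENNReal.ofReal p) ν := hu.restrict B
    have h2 : (1:ℝ≥0∞) ≤ ENNReal.ofReal p := by
      rw [← ENNReal.ofReal_one]; exact ENNReal.ofReal_le_ofReal hp1.le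
    exact memLp_one_iff_integrable.mp (h1.mono_exponent h2)
  set uB := ⨍ η in B, u η with huB
  set g : H N → ℝ≥0∞ := fun ξ => ∫⁻ η, ENNReal.ofReal |u ξ - u η| ∂ν with hg
  have hgfin : ∀ ξ, g ξ ≠ ⊤ := by
    intro ξ
    have h1 : Integrable (fun η => u ξ - u η) ν := (integrable_const (u ξ)).sub hui
    have heq : g ξ = ∫⁻ η, ‖u ξ - u η‖ₑ ∂ν := by
      refine lintegral_congr fun η => ?_
      rw [← ofReal_norm, Real.norm_eq_abs]
    rw [heq]
    exact h1.2.ne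
  have hptreal : ∀ ξ, |u ξ - uB| ≤ m⁻¹ * (g ξ).toReal := by
    intro ξ
    have h1 : ∫ η, (u ξ - u η) ∂ν = m * u ξ - ∫ η, u η ∂ν := by
      rw [integral_sub (integrable_const _) hui, integral_const]
      rw [hν, measureReal_restrict_apply_univ, measureReal_def, ← hV, ← hm, smul_eq_mul]
    have h2 : |∫ η, (u ξ - u η) ∂ν| ≤ ∫ η, |u ξ - u η| ∂ν := by
      simpa [Real.norm_eq_abs] using
        norm_integral_le_integral_norm (μ := ν) (fun η => u ξ - u η)
    have hsm : AEStronglyMeasurable (fun η => |u ξ - u η|) ν := by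
      simpa [Real.norm_eq_abs] using
        (aestronglyMeasurable_const.sub hui.aestronglyMeasurable).norm
    have h3 : ∫ η, |u ξ - u η| ∂ν = (g ξ).toReal := by
      rw [integral_eq_lintegral_of_nonneg_ae (Eventually.of_forall fun η => abs_nonneg _) hsm]
    have h4 : u ξ - uB = m⁻¹ * (m * u ξ - ∫ η, u η ∂ν) := by
      rw [huB, setAverage_eq, smul_eq_mul, measureReal_def, ← hV, ← hm]
      field_simp
      ring
    calc |u ξ - uB| = m⁻¹ * |∫ η, (u ξ - u η) ∂ν| := by
          rw [h4, abs_mul, abs_of_pos (inv_pos.2 hm0), h1]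
      _ ≤ m⁻¹ * (g ξ).toReal := by
          rw [← h3]
          exact mul_le_mul_of_nonneg_left h2 (inv_nonneg.2 hm0.le)
  have hpt : ∀ ξ, ENNReal.ofReal |u ξ - uB| ≤ V⁻¹ * g ξ := by
    intro ξ
    calc ENNReal.ofReal |u ξ - uB| ≤ ENNReal.ofReal (m⁻¹ * (g ξ).toReal) :=
          ENNReal.ofReal_le_ofReal (hptreal ξ)
      _ = ENNReal.ofReal m⁻¹ * ENNReal.ofReal (g ξ).toReal :=
          ENNReal.ofReal_mul (inv_nonneg.2 hm0.le)
      _ = V⁻¹ * g ξ := by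
          rw [ENNReal.ofReal_inv_of_pos hm0, hm, ENNReal.ofReal_toReal hVt,
            ENNReal.ofReal_toReal (hgfin ξ)]
  set J := ∫⁻ ξ, ENNReal.ofReal |u ξ - uB| ∂ν with hJ
  set T := ∫⁻ ξ, g ξ ∂ν with hT
  have hJle : J ≤ V⁻¹ * T := by
    calc J ≤ ∫⁻ ξ, V⁻¹ * g ξ ∂ν := lintegral_mono fun ξ => hpt ξ
      _ = V⁻¹ * T := lintegral_const_mul' _ _ (ENNReal.inv_ne_top.2 hV0)
  -- measurability on the product
  have hu1 : AEMeasurable u ν := hu.1.aemeasurable.restrict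
  have f1 : AEMeasurable (fun z : H N × H N => u z.1) (ν.prod ν) :=
    hu1.comp_quasiMeasurePreserving Measure.quasiMeasurePreserving_fst
  have f2 : AEMeasurable (fun z : H N × H N => u z.2) (ν.prod ν) :=
    hu1.comp_quasiMeasurePreserving Measure.quasiMeasurePreserving_snd
  have habs : AEMeasurable (fun z : H N × H N => |u z.1 - u z.2|) (ν.prod ν) :=
    measurable_abs.comp_aemeasurable (f1.sub f2)
  have hfm : AEMeasurable (fun z : H N × H N => ENNReal.ofReal |u z.1 - u z.2|) (ν.prod ν) :=
    ENNReal.measurable_ofReal.comp_aemeasurable habs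
  have hTprod : T = ∫⁻ z, ENNReal.ofReal |u z.1 - u z.2| ∂(ν.prod ν) :=
    (lintegral_prod _ hfm).symm
  -- Hölder
  have hpq : p.HolderConjugate (Real.conjExponent p) := Real.HolderConjugate.conjExponent hp1
  set P := ∫⁻ z, (ENNReal.ofReal |u z.1 - u z.2|) ^ p ∂(ν.prod ν) with hP
  have hone : (∫⁻ _z, ((1:ℝ≥0∞) ^ (Real.conjExponent p)) ∂(ν.prod ν)) = V * V := by
    simp only [ENNReal.one_rpow, lintegral_one]
    rw [← Set.univ_prod_univ, Measure.prod_prod, hν, Measure.restrict_apply_univ]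
  have hq1 : 1 / Real.conjExponent p = 1 - 1/p := by
    have := hpq.inv_add_inv_eq_inv.trans inv_one
    rw [one_div, one_div]
    linarith
  have hTle : T ≤ P ^ (1/p) * (V * V) ^ (1 - 1/p) := by
    rw [hTprod]
    have h0 := ENNReal.lintegral_mul_le_Lp_mul_Lq (ν.prod ν) hpq hfm
      (aemeasurable_const (b := (1:ℝ≥0∞)))
    simp only [Pi.mul_apply, mul_one] at h0
    calc (∫⁻ z, ENNReal.ofReal |u z.1 - u z.2| ∂(ν.prod ν)) ≤
        (∫⁻ z, (ENNReal.ofReal |u z.1 - u z.2|) ^ p ∂(ν.prod ν)) ^ (1/p) *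
          (∫⁻ _z, ((1:ℝ≥0∞) ^ (Real.conjExponent p)) ∂(ν.prod ν)) ^ (1/Real.conjExponent p) := h0
      _ = P ^ (1/p) * (V * V) ^ (1 - 1/p) := by rw [hone, hq1]
  -- pointwise domination on B ×ˢ B
  set K := ENNReal.ofReal ((4*ρ) ^ D) with hK
  have hKt : K ≠ ⊤ := ENNReal.ofReal_ne_top
  have hball : ∀ ξ ∈ B, ∀ η ∈ B, ENNReal.ofReal (|u ξ - u η| ^ p) ≤
      K * ENNReal.ofReal (|u ξ - u η| ^ p / hdist η ξ ^ D) := by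
    intro ξ hξ η hη
    rcases eq_or_lt_of_le (hnorm_nonneg (hmul (hinv η) ξ)) with hzero | hpos
    · have : η = ξ := eq_of_hdist_eq_zero (hzero.symm)
      subst this
      simp [Real.zero_rpow (ne_of_gt hp0), abs_nonneg]
    · have hd0 : 0 < hdist η ξ := hpos
      have hdle : hdist η ξ ≤ 4*ρ := hdist_lt_of_mem_ball hξ hη
      have hdD : hdist η ξ ^ D ≤ (4*ρ) ^ D := Real.rpow_le_rpow hd0.le hdle hD0
      have hdD0 : 0 < hdist η ξ ^ D := Real.rpow_pos_of_pos hd0 D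
      have key : |u ξ - u η| ^ p ≤ (|u ξ - u η| ^ p / hdist η ξ ^ D) * ((4*ρ) ^ D) := by
        rw [div_mul_eq_mul_div, le_div_iff₀ hdD0]
        exact mul_le_mul_of_nonneg_left hdD (Real.rpow_nonneg (abs_nonneg _) p)
      calc ENNReal.ofReal (|u ξ - u η| ^ p) ≤
          ENNReal.ofReal ((|u ξ - u η| ^ p / hdist η ξ ^ D) * ((4*ρ) ^ D)) :=
            ENNReal.ofReal_le_ofReal key
        _ = K * ENNReal.ofReal (|u ξ - u η| ^ p / hdist η ξ ^ D) := by
            rw [ENNReal.ofReal_mul (by positivity), mul_comm, hK]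
  -- bound P by K * X
  have hres : ν.prod ν = (volume.prod volume).restrict (B ×ˢ B) := by
    rw [hν, Measure.prod_restrict]
  have hae : ∀ᵐ z ∂(ν.prod ν), z ∈ B ×ˢ B := by
    rw [hres]
    exact ae_restrict_mem ((measurableSet_ball _ _).prod (measurableSet_ball _ _))
  have hXmeas : AEMeasurable
      (fun z : H N × H N => ENNReal.ofReal (|u z.1 - u z.2| ^ p / hdist z.2 z.1 ^ D))
      ((volume : Measure (H N)).prod volume) := by
    have g1 : AEMeasurable (fun z : H N × H N => u z.1) ((volume : Measure (H N)).prod volume) :=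
      hu.1.aemeasurable.comp_quasiMeasurePreserving Measure.quasiMeasurePreserving_fst
    have g2 : AEMeasurable (fun z : H N × H N => u z.2) ((volume : Measure (H N)).prod volume) :=
      hu.1.aemeasurable.comp_quasiMeasurePreserving Measure.quasiMeasurePreserving_snd
    have gabs : AEMeasurable (fun z : H N × H N => |u z.1 - u z.2|)
        ((volume : Measure (H N)).prod volume) := measurable_abs.comp_aemeasurable (g1.sub g2)
    have gnum : AEMeasurable (fun z : H N × H N => |u z.1 - u z.2| ^ p)
        ((volume : Measure (H N)).prod volume) :=
      (by fun_prop : Measurable fun x : ℝ => x ^ p).comp_aemeasurable gabs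
    have gden : Measurable (fun z : H N × H N => hdist z.2 z.1 ^ D) := by
      have hc : Continuous (fun z : H N × H N => hdist z.2 z.1) := by
        apply continuous_hnorm.comp
        unfold hmul hinv
        fun_prop
      exact ((by fun_prop : Measurable fun x : ℝ => x ^ D).comp hc.measurable)
    exact ENNReal.measurable_ofReal.comp_aemeasurable (gnum.div gden.aemeasurable)
  have hXprod : (∫⁻ z, ENNReal.ofReal (|u z.1 - u z.2| ^ p / hdist z.2 z.1 ^ D)
      ∂((volume : Measure (H N)).prod volume)) = X := by
    rw [hX]
    exact lintegral_prod _ hXmeas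
  have hPle : P ≤ K * X := by
    calc P = ∫⁻ z, ENNReal.ofReal (|u z.1 - u z.2| ^ p) ∂(ν.prod ν) :=
          lintegral_congr fun z => ENNReal.ofReal_rpow_of_nonneg (abs_nonneg _) hp0.le
      _ ≤ ∫⁻ z, K * ENNReal.ofReal (|u z.1 - u z.2| ^ p / hdist z.2 z.1 ^ D) ∂(ν.prod ν) :=
          lintegral_mono_ae (hae.mono fun z hz => hball z.1 hz.1 z.2 hz.2)
      _ = K * ∫⁻ z, ENNReal.ofReal (|u z.1 - u z.2| ^ p / hdist z.2 z.1 ^ D) ∂(ν.prod ν) :=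
          lintegral_const_mul' _ _ hKt
      _ ≤ K * ∫⁻ z, ENNReal.ofReal (|u z.1 - u z.2| ^ p / hdist z.2 z.1 ^ D)
            ∂((volume : Measure (H N)).prod volume) := by
          refine mul_le_mul_right (lintegral_mono' ?_ le_rfl) K
          rw [hres]
          exact Measure.restrict_le_self
      _ = K * X := by rw [hXprod]
  -- assemble the ENNReal chain
  set Lo := ENNReal.ofReal ((ρ/N)^(2*N) * ρ^2) with hLo
  have hLopos : 0 < Lo := ENNReal.ofReal_pos.2 hLo0
  set W := V * V with hW
  have hW0 : W ≠ 0 := mul_ne_zero hV0 hV0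
  have hWt : W ≠ ⊤ := ENNReal.mul_ne_top hVt hVt
  have hmain : V⁻¹ * J ≤ (Lo * Lo) ^ (-(1/p)) * (K ^ (1/p) * X ^ (1/p)) := by
    have step1 : V⁻¹ * J ≤ V⁻¹ * (V⁻¹ * T) := mul_le_mul_right hJle _
    have step2 : V⁻¹ * (V⁻¹ * T) = W⁻¹ * T := by
      rw [hW, ← mul_assoc, ENNReal.mul_inv (Or.inl hV0) (Or.inl hVt)]
    have step3 : W⁻¹ * T ≤ W⁻¹ * ((K * X) ^ (1/p) * W ^ (1 - 1/p)) := by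
      refine mul_le_mul_right ?_ _
      refine le_trans hTle ?_
      exact mul_le_mul_left (ENNReal.rpow_le_rpow hPle (by positivity)) _
    have step4 : W⁻¹ * ((K * X) ^ (1/p) * W ^ (1 - 1/p)) = W ^ (-(1/p)) * (K * X) ^ (1/p) := by
      rw [mul_comm ((K * X) ^ (1/p)) (W ^ (1 - 1/p)), ← mul_assoc]
      congr 1
      rw [← ENNReal.rpow_neg_one W, ← ENNReal.rpow_add _ _ hW0 hWt]
      congr 1
      ring
    have step5 : W ^ (-(1/p)) ≤ (Lo * Lo) ^ (-(1/p)) := by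
      rw [ENNReal.rpow_neg, ENNReal.rpow_neg]
      exact ENNReal.inv_le_inv.2 (ENNReal.rpow_le_rpow (mul_le_mul' hVlo hVlo) (by positivity))
    have step6 : (K * X) ^ (1/p) = K ^ (1/p) * X ^ (1/p) :=
      ENNReal.mul_rpow_of_nonneg _ _ (by positivity)
    calc V⁻¹ * J ≤ W⁻¹ * T := step2 ▸ step1
      _ ≤ W ^ (-(1/p)) * (K * X) ^ (1/p) := step4 ▸ step3
      _ ≤ (Lo * Lo) ^ (-(1/p)) * (K ^ (1/p) * X ^ (1/p)) := by
          rw [← step6]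
          exact mul_le_mul_left step5 _
  -- convert to real
  have havg : (⨍ ξ in B, |u ξ - uB|) = (V⁻¹ * J).toReal := by
    rw [setAverage_eq, smul_eq_mul, measureReal_def, ENNReal.toReal_mul, ENNReal.toReal_inv, ← hV]
    congr 1
    have hsm : AEStronglyMeasurable (fun ξ => |u ξ - uB|) ν := by
      simpa [Real.norm_eq_abs] using
        (hui.aestronglyMeasurable.sub aestronglyMeasurable_const).norm
    rw [integral_eq_lintegral_of_nonneg_ae (Eventually.of_forall fun ξ => abs_nonneg _) hsm]
  have hMt1 : (Lo * Lo) ^ (-(1/p)) ≠ ⊤ := by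
    rw [ENNReal.rpow_neg]
    exact ENNReal.inv_ne_top.2 (ENNReal.rpow_pos (ENNReal.mul_pos hLopos.ne' hLopos.ne') (ENNReal.mul_ne_top
      ENNReal.ofReal_ne_top ENNReal.ofReal_ne_top)).ne'
  have hMt2 : K ^ (1/p) ≠ ⊤ := ENNReal.rpow_ne_top_of_nonneg (by positivity) hKt
  have hMt3 : X ^ (1/p) ≠ ⊤ := ENNReal.rpow_ne_top_of_nonneg (by positivity) hXt
  have hMt : (Lo * Lo) ^ (-(1/p)) * (K ^ (1/p) * X ^ (1/p)) ≠ ⊤ :=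
    ENNReal.mul_ne_top hMt1 (ENNReal.mul_ne_top hMt2 hMt3)
  have hreal : (⨍ ξ in B, |u ξ - uB|) ≤
      ((Lo * Lo) ^ (-(1/p)) * (K ^ (1/p) * X ^ (1/p))).toReal := by
    rw [havg]
    exact ENNReal.toReal_mono hMt hmain
  -- compute the RHS
  set lo := (ρ/N)^(2*N) * ρ^2 with hlo
  have hrhs : ((Lo * Lo) ^ (-(1/p)) * (K ^ (1/p) * X ^ (1/p))).toReal =
      ((lo * lo) ^ (-(1/p)) * ((4*ρ) ^ D) ^ (1/p)) * X.toReal ^ (1/p) := by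
    rw [ENNReal.toReal_mul, ENNReal.toReal_mul, ← ENNReal.toReal_rpow, ← ENNReal.toReal_rpow,
      ← ENNReal.toReal_rpow, ENNReal.toReal_mul, hLo, hK,
      ENNReal.toReal_ofReal hLo0.le, ENNReal.toReal_ofReal (by positivity : (0:ℝ) ≤ (4*ρ)^D)]
    ring
  -- constant computation
  have hCeq : (lo * lo) ^ (-(1/p)) * ((4*ρ) ^ D) ^ (1/p) = C := by
    have hlopos : 0 < lo := hLo0
    have h4D : (4*ρ) ^ D = (4*ρ) ^ (4*N+4 : ℕ) := by
      rw [hDnat, Real.rpow_natCast]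
    have hρ0 : ρ ≠ 0 := hρ.ne'
    have hN0 : (N:ℝ) ≠ 0 := hNR.ne'
    rw [Real.rpow_neg (by positivity), ← Real.inv_rpow (by positivity),
      ← Real.mul_rpow (by positivity) (by positivity), hC]
    congr 1
    rw [h4D, hlo, mul_pow]
    field_simp
    ring
    rw [mul_assoc (ρ ^ 4 * ρ ^ (N * 4)), ← mul_pow, mul_inv_cancel₀ hN0, one_pow, mul_one]
  have hfinal : ((Lo * Lo) ^ (-(1/p)) * (K ^ (1/p) * X ^ (1/p))).toReal =
      C * X.toReal ^ (1/p) := by rw [hrhs, hCeq]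
  exact hreal.trans_eq hfinal

end Heis
end
end
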